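/- In the symmetric quadratic-equation setup, suppose |λ_r| − ε > max{3τ, 64(1+rμ)·r^{3/2}·μ^{1/2}·κ}. Let Q̄ = V_⊥Q be any solution of the quadratic equation Q̄L̄_1 − L̄_2Q̄ = H − Q̄HᵀQ̄ with ‖Q̄‖_max ≤ ω/√d, and set V̄ = (V + Q̄)(I_r + Q̄ᵀQ̄)^{−1/2}. Then there exists an orthogonal matrix R ∈ ℝ^{r×r} such that the columns of V̄R are ṽ_1,…,ṽ_r, the top-r (by absolute eigenvalue) orthonormal eigenvectors of Ã = A + E. -/

import Mathlib

open Matrix BigOperators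

/-- Entrywise max norm: largest absolute value of an entry. -/
noncomputable def matMaxNorm {m n : Type*} [Fintype m] [Fintype n] (M : Matrix m n ℝ) : ℝ :=
  ⨆ i, ⨆ j, |M i j|

/-- Matrix ∞-norm: maximum absolute row sum. -/
noncomputable def matInfNorm {m n : Type*} [Fintype m] [Fintype n] (M : Matrix m n ℝ) : ℝ :=
  ⨆ i, ∑ j, |M i j|

/-- Matrix 1-norm: maximum absolute column sum. -/
noncomputable def matOneNorm {m n : Type*} [Fintype m] [Fintype n] (M : Matrix m n ℝ) : ℝ :=
  ⨆ j, ∑ i, |M i j|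

/-- Euclidean norm of a vector. -/
noncomputable def vec2Norm {n : Type*} [Fintype n] (x : n → ℝ) : ℝ :=
  Real.sqrt (∑ i, (x i) ^ 2)

/-- ℓ∞ norm of a vector. -/
noncomputable def vecSupNorm {n : Type*} [Fintype n] (x : n → ℝ) : ℝ :=
  ⨆ i, |x i|

/-- Spectral norm (operator 2-norm) of a matrix. -/
noncomputable def matSpecNorm {m n : Type*} [Fintype m] [Fintype n] (M : Matrix m n ℝ) : ℝ :=
  sSup {c : ℝ | ∃ x : n → ℝ, vec2Norm x ≤ 1 ∧ c = vec2Norm (M.mulVec x)}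

/-- Coherence of a d × r matrix with orthonormal columns. -/
noncomputable def matCoherence {d r : ℕ} (V : Matrix (Fin d) (Fin r) ℝ) : ℝ :=
  ((d : ℝ) / (r : ℝ)) * ⨆ i, ∑ j, (V i j) ^ 2

/-- Inverse of the positive semidefinite square root of a matrix (junk value otherwise). -/
noncomputable def matInvSqrt {n : Type*} [Fintype n] [DecidableEq n] (S : Matrix n n ℝ) :
    Matrix n n ℝ :=
  letI := Classical.propDecidable
  if h : S.PosSemidef then
    (h.1.eigenvectorUnitary.1 * diagonal ((↑) ∘ (√·) ∘ h.1.eigenvalues) *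
      (star h.1.eigenvectorUnitary : Matrix n n ℝ))⁻¹ else 0

/-- Weighted max-norm for matrices with d₁ + d₂ rows. -/
noncomputable def wMaxNorm {d₁ d₂ : ℕ} {n : Type*} [Fintype n]
    (M : Matrix (Fin d₁ ⊕ Fin d₂) n ℝ) : ℝ :=
  matMaxNorm (Matrix.of fun i j =>
    (Sum.elim (fun _ : Fin d₁ => Real.sqrt d₁) (fun _ : Fin d₂ => Real.sqrt d₂) i) * M i j)

/-- Huber loss with parameter α. -/
noncomputable def huberLoss (α x : ℝ) : ℝ := if |x| ≤ α then x ^ 2 else 2 * α * |x| - α ^ 2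

/-!
Writing `M = V + Q̄`, the quadratic equation says exactly that `(A + E) M = M (L̄₁ + Hᵀ Q̄)`, so
the columns of `V̄ = M (MᵀM)^{-1/2}` form an orthonormal basis of an `(A + E)`-invariant subspace.
The max-norm bound on `Q̄` and the gap condition give `‖Q̄‖_F ≤ 1/8`, hence every unit vector `u`
of this subspace has `‖Vᵀu‖² ≥ 64/65`; comparing `(A + E) u = μ u` with the action of `Λ₁` on
`Vᵀu` forces `|μ| > ε + τ`. On the other hand `A` has norm at most `ε` on the orthogonal
complement of `V`, so a Courant–Fischer argument bounds `|λ̃ᵢ| ≤ ε + τ` for `i > r`. Eigenvectors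
of the symmetric matrix `A + E` with distinct eigenvalues are orthogonal, so the invariant
subspace is spanned by `ṽ₁, …, ṽᵣ`, and `R = V̄ᵀ Ṽ` is the required orthogonal matrix.
-/

open Finset

namespace SymmetricPerturbation

section Norms

variable {m n : Type*} [Fintype m] [Fintype n]

theorem abs_le_matMaxNorm (M : Matrix m n ℝ) (i : m) (j : n) : |M i j| ≤ matMaxNorm M :=
  (le_ciSup (Set.finite_range _).bddAbove j).trans
    (le_ciSup (f := fun i => ⨆ j, |M i j|) (Set.finite_range _).bddAbove i)

theorem matMaxNorm_nonneg (M : Matrix m n ℝ) : 0 ≤ matMaxNorm M :=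
  Real.iSup_nonneg fun _ => Real.iSup_nonneg fun _ => abs_nonneg _

theorem sum_abs_le_matInfNorm (M : Matrix m n ℝ) (i : m) : ∑ j, |M i j| ≤ matInfNorm M :=
  le_ciSup (f := fun i => ∑ j, |M i j|) (Set.finite_range _).bddAbove i

theorem matInfNorm_nonneg (M : Matrix m n ℝ) : 0 ≤ matInfNorm M :=
  Real.iSup_nonneg fun _ => sum_nonneg fun _ _ => abs_nonneg _

theorem sum_sum_sq_le_of_matMaxNorm_le {M : Matrix m n ℝ} {c : ℝ} (h : matMaxNorm M ≤ c) :
    ∑ i, ∑ j, M i j ^ 2 ≤ Fintype.card m * (Fintype.card n * c ^ 2) := by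
  have hle : ∀ i j, M i j ^ 2 ≤ c ^ 2 := fun i j =>
    sq_le_sq' (by linarith [neg_abs_le (M i j), abs_le_matMaxNorm M i j])
      ((le_abs_self _).trans ((abs_le_matMaxNorm M i j).trans h))
  calc ∑ i, ∑ j, M i j ^ 2 ≤ ∑ _i : m, ∑ _j : n, c ^ 2 :=
        sum_le_sum fun i _ => sum_le_sum fun j _ => hle i j
    _ = _ := by simp

theorem abs_le_matInfNorm_of_mulVec_eq_smul {M : Matrix n n ℝ} {x : n → ℝ} {l : ℝ} (hx : x ≠ 0)
    (h : M *ᵥ x = l • x) : |l| ≤ matInfNorm M := by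
  obtain ⟨i₀, hi₀⟩ := Function.ne_iff.1 hx
  obtain ⟨i, -, hi⟩ := exists_max_image univ (fun i => |x i|) ⟨i₀, mem_univ _⟩
  have hxi : 0 < |x i| := (abs_pos.2 hi₀).trans_le (hi i₀ (mem_univ _))
  refine le_of_mul_le_mul_right ?_ hxi
  calc |l| * |x i| = |(M *ᵥ x) i| := by rw [h, Pi.smul_apply, smul_eq_mul, abs_mul]
    _ ≤ ∑ j, |M i j| * |x i| :=
        (abs_sum_le_sum_abs _ _).trans (sum_le_sum fun j _ => by
          rw [abs_mul]; exact mul_le_mul_of_nonneg_left (hi j (mem_univ _)) (abs_nonneg _))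
    _ ≤ matInfNorm M * |x i| := by
        rw [← sum_mul]; exact mul_le_mul_of_nonneg_right (sum_abs_le_matInfNorm M i) hxi.le

theorem dotProduct_self_nonneg (x : n → ℝ) : 0 ≤ x ⬝ᵥ x :=
  Fintype.sum_nonneg fun _ => mul_self_nonneg _

theorem mulVec_dotProduct_mulVec (M : Matrix m n ℝ) (x y : n → ℝ) :
    (M *ᵥ x) ⬝ᵥ (M *ᵥ y) = x ⬝ᵥ ((Mᵀ * M) *ᵥ y) := by
  rw [← mulVec_mulVec, mulVec_transpose, dotProduct_comm, dotProduct_mulVec, dotProduct_comm]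

theorem add_dotProduct_self_le {a b : n → ℝ} {α β s : ℝ} (hα : 0 ≤ α) (hβ : 0 ≤ β) (hs : 0 ≤ s)
    (ha : a ⬝ᵥ a ≤ α ^ 2 * s) (hb : b ⬝ᵥ b ≤ β ^ 2 * s) :
    (a + b) ⬝ᵥ (a + b) ≤ (α + β) ^ 2 * s := by
  have hcs : (a ⬝ᵥ b) ^ 2 ≤ (a ⬝ᵥ a) * (b ⬝ᵥ b) := by
    simpa only [dotProduct, sq] using sum_mul_sq_le_sq_mul_sq univ a b
  have hab : a ⬝ᵥ b ≤ α * β * s := by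
    nlinarith [mul_le_mul ha hb (dotProduct_self_nonneg b) (by positivity),
      mul_nonneg (mul_nonneg hα hβ) hs]
  rw [add_dotProduct, dotProduct_add, dotProduct_add, dotProduct_comm b a]
  nlinarith

theorem mulVec_dotProduct_self_le_of_sum_abs_le (M : Matrix m n ℝ) {a b : ℝ} (ha : 0 ≤ a)
    (hrow : ∀ i, ∑ j, |M i j| ≤ a) (hcol : ∀ j, ∑ i, |M i j| ≤ b) (x : n → ℝ) :
    (M *ᵥ x) ⬝ᵥ (M *ᵥ x) ≤ a * b * (x ⬝ᵥ x) := by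
  have hrow_sq : ∀ i, (M *ᵥ x) i * (M *ᵥ x) i ≤ a * ∑ j, |M i j| * (x j * x j) := by
    intro i
    have hcs := sum_sq_le_sum_mul_sum_of_sq_le_mul univ (r := fun j => |M i j| * |x j|)
      (fun j _ => abs_nonneg (M i j)) (fun j _ => mul_nonneg (abs_nonneg (M i j))
        (mul_self_nonneg (x j)))
      (fun j _ => by rw [mul_pow, sq, sq, ← abs_mul_abs_self (x j)]; ring_nf; rfl)
    calc (M *ᵥ x) i * (M *ᵥ x) i ≤ (∑ j, |M i j| * |x j|) ^ 2 := by
          rw [← sq, ← sq_abs]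
          refine pow_le_pow_left₀ (abs_nonneg _) ?_ 2
          exact (abs_sum_le_sum_abs _ _).trans_eq (sum_congr rfl fun j _ => abs_mul _ _)
      _ ≤ _ := hcs.trans (mul_le_mul_of_nonneg_right (hrow i)
          (sum_nonneg fun j _ => mul_nonneg (abs_nonneg _) (mul_self_nonneg _)))
  calc (M *ᵥ x) ⬝ᵥ (M *ᵥ x) ≤ ∑ i, a * ∑ j, |M i j| * (x j * x j) :=
        sum_le_sum fun i _ => hrow_sq i
    _ = a * ∑ j, (∑ i, |M i j|) * (x j * x j) := by
        rw [← mul_sum, sum_comm]; simp_rw [sum_mul]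
    _ ≤ a * ∑ j, b * (x j * x j) := by
        gcongr with j; exact mul_self_nonneg _; exact hcol j
    _ = a * b * (x ⬝ᵥ x) := by rw [← mul_sum, mul_assoc]; rfl

theorem mulVec_dotProduct_self_le_matInfNorm_sq {E : Matrix n n ℝ} (hE : Eᵀ = E) (x : n → ℝ) :
    (E *ᵥ x) ⬝ᵥ (E *ᵥ x) ≤ matInfNorm E ^ 2 * (x ⬝ᵥ x) := by
  rw [sq]
  refine mulVec_dotProduct_self_le_of_sum_abs_le E (matInfNorm_nonneg E)
    (sum_abs_le_matInfNorm E) (fun j => ?_) x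
  calc ∑ i, |E i j| = ∑ i, |E j i| := sum_congr rfl fun i _ => by
        rw [← Matrix.transpose_apply E j i, hE]
    _ ≤ matInfNorm E := sum_abs_le_matInfNorm E j

theorem mulVec_dotProduct_self_le_sum_sum_sq (M : Matrix m n ℝ) (x : n → ℝ) :
    (M *ᵥ x) ⬝ᵥ (M *ᵥ x) ≤ (∑ i, ∑ j, M i j ^ 2) * (x ⬝ᵥ x) := by
  calc (M *ᵥ x) ⬝ᵥ (M *ᵥ x) = ∑ i, (∑ j, M i j * x j) ^ 2 := by
        simp only [dotProduct, sq]; rfl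
    _ ≤ ∑ i, (∑ j, M i j ^ 2) * ∑ j, x j ^ 2 :=
        sum_le_sum fun i _ => sum_mul_sq_le_sq_mul_sq _ _ _
    _ = _ := by rw [← sum_mul]; simp only [dotProduct, sq]

end Norms

section Orthonormal

variable {m n κ κ' ι : Type*} [Fintype m] [Fintype n]

theorem mulVec_dotProduct_self_of_orthonormal [DecidableEq n] {W : Matrix m n ℝ}
    (hW : Wᵀ * W = 1) (x : n → ℝ) : (W *ᵥ x) ⬝ᵥ (W *ᵥ x) = x ⬝ᵥ x := by
  rw [mulVec_dotProduct_mulVec, hW, one_mulVec]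

theorem diagonal_mulVec_dotProduct_self [DecidableEq n] (l x : n → ℝ) :
    (diagonal l *ᵥ x) ⬝ᵥ (diagonal l *ᵥ x) = ∑ i, l i ^ 2 * x i ^ 2 := by
  simp only [mulVec_diagonal, dotProduct]
  exact sum_congr rfl fun i _ => by ring

theorem transpose_mulVec_dotProduct_self_le [DecidableEq m] [Fintype κ] {V : Matrix m n ℝ}
    {W : Matrix m κ ℝ} (hVW : V * Vᵀ + W * Wᵀ = 1) (x : m → ℝ) :
    (Vᵀ *ᵥ x) ⬝ᵥ (Vᵀ *ᵥ x) ≤ x ⬝ᵥ x := by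
  have hsplit : x ⬝ᵥ x = (Vᵀ *ᵥ x) ⬝ᵥ (Vᵀ *ᵥ x) + (Wᵀ *ᵥ x) ⬝ᵥ (Wᵀ *ᵥ x) := by
    rw [mulVec_dotProduct_mulVec, mulVec_dotProduct_mulVec, transpose_transpose,
      transpose_transpose, ← dotProduct_add, ← add_mulVec, hVW, one_mulVec]
  rw [hsplit, le_add_iff_nonneg_right]
  exact dotProduct_self_nonneg _

theorem transpose_mul_self_of_orthonormal [DecidableEq ι] [DecidableEq κ] {v : ι → n → ℝ}
    (hv : ∀ i j, ∑ a, v i a * v j a = if i = j then (1 : ℝ) else 0) {f : κ → ι}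
    (hf : f.Injective) : (of fun a k => v (f k) a)ᵀ * (of fun a k => v (f k) a) = 1 := by
  ext k l
  simp [mul_apply, hv, one_apply, hf.eq_iff]

theorem transpose_mul_of_orthonormal_eq_zero [DecidableEq ι] {v : ι → n → ℝ}
    (hv : ∀ i j, ∑ a, v i a * v j a = if i = j then (1 : ℝ) else 0) {f : κ → ι} {g : κ' → ι}
    (hfg : ∀ k l, f k ≠ g l) : (of fun a k => v (f k) a)ᵀ * (of fun a l => v (g l) a) = 0 := by
  ext k l
  simp [mul_apply, hv, hfg]

theorem mul_of_eigenvectors [Fintype κ] [DecidableEq κ] {A : Matrix n n ℝ} {v : ι → n → ℝ}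
    {lam : ι → ℝ} (h : ∀ i, A *ᵥ v i = lam i • v i) (f : κ → ι) :
    A * (of fun a k => v (f k) a) = (of fun a k => v (f k) a) * diagonal fun k => lam (f k) := by
  ext a k
  have hk := congrFun (h (f k)) a
  rw [Pi.smul_apply, smul_eq_mul] at hk
  rw [mul_diagonal, of_apply, mul_comm, ← hk]
  rfl

theorem transpose_mul_eq_diagonal_mul [Fintype κ] [DecidableEq κ] {A : Matrix n n ℝ} (hA : Aᵀ = A)
    {V : Matrix n κ ℝ} {l : κ → ℝ} (h : A * V = V * diagonal l) : Vᵀ * A = diagonal l * Vᵀ := by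
  simpa [transpose_mul, hA] using congrArg transpose h

theorem mul_transpose_add_mul_transpose_eq_one [Fintype κ] [Fintype κ'] [DecidableEq n]
    [DecidableEq κ] [DecidableEq κ'] (e : n ≃ κ ⊕ κ') {V : Matrix n κ ℝ} {W : Matrix n κ' ℝ}
    (hV : Vᵀ * V = 1) (hVW : Vᵀ * W = 0) (hW : Wᵀ * W = 1) : V * Vᵀ + W * Wᵀ = 1 := by
  have hWV : Wᵀ * V = 0 := by simpa [transpose_mul] using congrArg transpose hVW
  rw [← fromCols_mul_fromRows, fromCols_mul_fromRows_eq_one_comm e, fromRows_mul_fromCols, hV,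
    hVW, hWV, hW, fromBlocks_one]

theorem transpose_mul_self_add [DecidableEq κ] {V Q : Matrix n κ ℝ} (hVV : Vᵀ * V = 1)
    (hVQ : Vᵀ * Q = 0) : (V + Q)ᵀ * (V + Q) = 1 + Qᵀ * Q := by
  have hQV : Qᵀ * V = 0 := by simpa [transpose_mul] using congrArg transpose hVQ
  rw [transpose_add, Matrix.add_mul, Matrix.mul_add, Matrix.mul_add, hVV, hVQ, hQV, add_zero,
    zero_add]

theorem posDef_transpose_mul_self_add [Fintype κ] [DecidableEq κ] {V Q : Matrix n κ ℝ} (hVV : Vᵀ * V = 1)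
    (hVQ : Vᵀ * Q = 0) : ((V + Q)ᵀ * (V + Q)).PosDef := by
  rw [transpose_mul_self_add hVV hVQ]
  exact PosDef.one.add_posSemidef (by simpa using posSemidef_conjTranspose_mul_self Q)

theorem abs_le_matInfNorm_of_mul_eq_mul_diagonal [Fintype κ] [DecidableEq κ] {M : Matrix n n ℝ}
    {W : Matrix n κ ℝ} {l : κ → ℝ} (hW : Wᵀ * W = 1) (h : M * W = W * diagonal l) (i : κ) :
    |l i| ≤ matInfNorm M := by
  refine abs_le_matInfNorm_of_mulVec_eq_smul (x := Wᵀ i) (fun h0 => ?_) ?_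
  · have hii : Wᵀ i ⬝ᵥ Wᵀ i = 1 := (congrFun (congrFun hW i) i).trans (one_apply_eq i)
    rw [h0, zero_dotProduct] at hii
    exact zero_ne_one hii
  · funext a
    have hai := congrFun (congrFun h a) i
    rw [mul_diagonal] at hai
    rw [Pi.smul_apply, smul_eq_mul, transpose_apply, mul_comm]
    exact hai

end Orthonormal

section HeadTail

variable {d r : ℕ} (hrd : r ≤ d)

theorem orthonormal_head_tail {v : Fin d → Fin d → ℝ}
    (hon : ∀ i j, ∑ a, v i a * v j a = if i = j then (1 : ℝ) else 0)
    {V : Matrix (Fin d) (Fin r) ℝ} {Vp : Matrix (Fin d) (Fin (d - r)) ℝ}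
    (hV : V = of fun a k => v (Fin.castLE hrd k) a)
    (hVp : Vp = of fun a (k : Fin (d - r)) => v ⟨r + k, by omega⟩ a) :
    Vᵀ * V = 1 ∧ Vᵀ * Vp = 0 ∧ Vpᵀ * Vp = 1 ∧ V * Vᵀ + Vp * Vpᵀ = 1 := by
  subst hV hVp
  have hVV := transpose_mul_self_of_orthonormal hon (Fin.castLE_injective hrd)
  have hVVp := transpose_mul_of_orthonormal_eq_zero hon (f := Fin.castLE hrd)
    (g := fun k : Fin (d - r) => (⟨r + k, by omega⟩ : Fin d)) fun k l h => by
      simp only [Fin.ext_iff, Fin.val_castLE] at h; omega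
  have hVpVp := transpose_mul_self_of_orthonormal hon
    (f := fun k : Fin (d - r) => (⟨r + k, by omega⟩ : Fin d)) fun k l h => by
      simpa [Fin.ext_iff] using h
  exact ⟨hVV, hVVp, hVpVp, mul_transpose_add_mul_transpose_eq_one
    ((finCongr (by omega)).trans finSumFinEquiv.symm) hVV hVVp hVpVp⟩

theorem abs_le_matInfNorm_sub_head {A : Matrix (Fin d) (Fin d) ℝ} {lam : Fin d → ℝ}
    {v : Fin d → Fin d → ℝ} (heig : ∀ i, A *ᵥ v i = lam i • v i)
    (hon : ∀ i j, ∑ a, v i a * v j a = if i = j then (1 : ℝ) else 0) (k : Fin (d - r)) :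
    |lam ⟨r + k, by omega⟩| ≤ matInfNorm (A - of fun a b => ∑ k : Fin r,
      lam (Fin.castLE hrd k) * v (Fin.castLE hrd k) a * v (Fin.castLE hrd k) b) := by
  obtain ⟨-, hVVp, hVpVp, -⟩ := orthonormal_head_tail hrd hon rfl rfl
  refine abs_le_matInfNorm_of_mul_eq_mul_diagonal hVpVp
    (l := fun k : Fin (d - r) => lam ⟨r + k, by omega⟩) ?_ k
  have hAr : (of fun a b => ∑ k : Fin r,
      lam (Fin.castLE hrd k) * v (Fin.castLE hrd k) a * v (Fin.castLE hrd k) b) =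
      (of fun a k => v (Fin.castLE hrd k) a) * (diagonal fun k => lam (Fin.castLE hrd k)) *
        (of fun a k => v (Fin.castLE hrd k) a)ᵀ := by
    ext a b
    rw [mul_apply]
    simp only [of_apply, mul_diagonal, transpose_apply]
    exact sum_congr rfl fun k _ => by ring
  rw [hAr, Matrix.sub_mul, Matrix.mul_assoc _ _ (of _), hVVp, Matrix.mul_zero, sub_zero]
  exact mul_of_eigenvectors heig _

theorem one_le_matCoherence (hr : 0 < r) {V : Matrix (Fin d) (Fin r) ℝ} (hV : Vᵀ * V = 1) :
    1 ≤ matCoherence V := by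
  have hsum : ∑ i, ∑ j, V i j ^ 2 = r := by
    calc ∑ i, ∑ j, V i j ^ 2 = ∑ j, (Vᵀ * V) j j := by
          rw [sum_comm]; simp only [mul_apply, transpose_apply, sq]
      _ = r := by simp [hV]
  have hle := sum_le_card_nsmul univ (fun i => ∑ j, V i j ^ 2) _ fun i _ =>
    le_ciSup (f := fun i => ∑ j, V i j ^ 2) (Set.finite_range _).bddAbove i
  rw [card_univ, Fintype.card_fin, nsmul_eq_mul] at hle
  rw [matCoherence, div_mul_eq_mul_div, le_div_iff₀ (by exact_mod_cast hr)]
  linarith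

end HeadTail

section Invariance

variable {n k p : Type*} [Fintype n] [Fintype k] [Fintype p] [DecidableEq n] [DecidableEq p]

/-- Expanding `V Vᵀ + Vp Vpᵀ = 1` turns the quadratic equation into the invariance
`(A + E) M = M S`. -/
theorem mul_eq_mul_of_riccati {A E : Matrix n n ℝ} {V : Matrix n k ℝ} {Vp : Matrix n p ℝ}
    {Λ₁ : Matrix k k ℝ} {Λ₂ : Matrix p p ℝ} (hAV : A * V = V * Λ₁) (hAVp : A * Vp = Vp * Λ₂)
    (hVp : Vpᵀ * Vp = 1) (hcompl : V * Vᵀ + Vp * Vpᵀ = 1) (hE : Eᵀ = E) {Q : Matrix p k ℝ}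
    (hQ : Vp * Q * (Λ₁ + Vᵀ * E * V) - Vp * (Λ₂ + Vpᵀ * E * Vp) * Vpᵀ * (Vp * Q) =
      Vp * (Vpᵀ * E * V) - Vp * Q * (Vp * (Vpᵀ * E * V))ᵀ * (Vp * Q)) :
    (A + E) * (V + Vp * Q) =
      (V + Vp * Q) * (Λ₁ + Vᵀ * E * V + (Vp * (Vpᵀ * E * V))ᵀ * (Vp * Q)) := by
  have hcompl' : ∀ X : Matrix n k ℝ, V * (Vᵀ * X) + Vp * (Vpᵀ * X) = X := fun X => by
    rw [← Matrix.mul_assoc, ← Matrix.mul_assoc, ← Matrix.add_mul, hcompl, Matrix.one_mul]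
  have hVp' : ∀ X : Matrix p k ℝ, Vpᵀ * (Vp * X) = X := fun X => by
    rw [← Matrix.mul_assoc, hVp, Matrix.one_mul]
  have hQ' : Vp * Q * (Λ₁ + Vᵀ * E * V) = Vp * (Λ₂ * Q) + Vp * (Vpᵀ * (E * (Vp * Q))) +
      Vp * (Vpᵀ * (E * V)) - Vp * (Q * (Vᵀ * (E * (Vp * Q)))) := by
    rw [sub_eq_iff_eq_add.1 hQ]
    simp only [transpose_mul, transpose_transpose, hE, Matrix.add_mul, Matrix.mul_add,
      Matrix.mul_assoc, hVp']
    abel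
  calc (A + E) * (V + Vp * Q) = V * Λ₁ + Vp * (Λ₂ * Q) + E * V + E * (Vp * Q) := by
        rw [Matrix.add_mul, Matrix.mul_add, Matrix.mul_add, hAV, ← Matrix.mul_assoc A, hAVp,
          Matrix.mul_assoc]
        abel
    _ = (V * (Vᵀ * (E * V)) + Vp * (Vpᵀ * (E * V))) +
          (V * (Vᵀ * (E * (Vp * Q))) + Vp * (Vpᵀ * (E * (Vp * Q)))) + V * Λ₁ +
          Vp * (Λ₂ * Q) := by
        rw [hcompl', hcompl']
        abel
    _ = _ := by
        rw [Matrix.mul_add (V + Vp * Q), Matrix.add_mul V (Vp * Q) (Λ₁ + Vᵀ * E * V), hQ']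
        simp only [transpose_mul, transpose_transpose, hE, Matrix.add_mul, Matrix.mul_add,
          Matrix.mul_assoc, hVp']
        abel

end Invariance

section Orthonormalization

variable {n k : Type*} [Fintype n] [Fintype k] [DecidableEq k]

theorem matInvSqrt_eq_inv_cfc {G : Matrix k k ℝ} (hG : G.PosSemidef) :
    matInvSqrt G = (cfc Real.sqrt G)⁻¹ := by
  -- `matInvSqrt` builds its eigendecomposition with classical decidable equality
  obtain rfl : ‹DecidableEq k› = fun a b => Classical.propDecidable (a = b) :=
    Subsingleton.elim _ _
  classical
  rw [hG.1.cfc_eq, matInvSqrt, dif_pos hG, IsHermitian.cfc, Unitary.conjStarAlgAut_apply]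
  rfl

theorem cfc_sqrt_mul_self {G : Matrix k k ℝ} (hG : G.PosSemidef) :
    cfc Real.sqrt G * cfc Real.sqrt G = G := by
  rw [← cfc_mul Real.sqrt Real.sqrt G]
  conv_rhs => rw [← cfc_id' ℝ G hG.1]
  refine cfc_congr fun x hx => Real.mul_self_sqrt ?_
  rw [hG.1.spectrum_real_eq_range_eigenvalues] at hx
  obtain ⟨i, rfl⟩ := hx
  exact hG.eigenvalues_nonneg i

theorem transpose_cfc (f : ℝ → ℝ) (G : Matrix k k ℝ) : (cfc f G)ᵀ = cfc f G := by
  rw [← conjTranspose_eq_transpose_of_trivial]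
  exact cfc_predicate f G

theorem exists_matInvSqrt_eq_inv {G : Matrix k k ℝ} (hG : G.PosDef) :
    ∃ s : Matrix k k ℝ, sᵀ = s ∧ s * s = G ∧ IsUnit s.det ∧ matInvSqrt G = s⁻¹ := by
  refine ⟨cfc Real.sqrt G, transpose_cfc _ _, cfc_sqrt_mul_self hG.posSemidef,
    isUnit_iff_ne_zero.2 fun h => hG.det_pos.ne' ?_, matInvSqrt_eq_inv_cfc hG.posSemidef⟩
  rw [← cfc_sqrt_mul_self hG.posSemidef, det_mul, h, zero_mul]

theorem transpose_mul_self_of_mul_matInvSqrt {M : Matrix n k ℝ} (hM : (Mᵀ * M).PosDef) :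
    (M * matInvSqrt (Mᵀ * M))ᵀ * (M * matInvSqrt (Mᵀ * M)) = 1 := by
  obtain ⟨s, hsT, hss, hs, hN⟩ := exists_matInvSqrt_eq_inv hM
  rw [hN, transpose_mul, transpose_nonsing_inv, hsT, Matrix.mul_assoc, ← Matrix.mul_assoc Mᵀ,
    ← hss, Matrix.mul_assoc s, mul_nonsing_inv _ hs, Matrix.mul_one, nonsing_inv_mul _ hs]

theorem exists_mul_eq_mul_of_mul_matInvSqrt {M : Matrix n k ℝ} (hM : (Mᵀ * M).PosDef)
    {A : Matrix n n ℝ} {S : Matrix k k ℝ} (h : A * M = M * S) :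
    ∃ T : Matrix k k ℝ, A * (M * matInvSqrt (Mᵀ * M)) = M * matInvSqrt (Mᵀ * M) * T := by
  obtain ⟨s, -, -, hs, hN⟩ := exists_matInvSqrt_eq_inv hM
  refine ⟨s * S * s⁻¹, ?_⟩
  rw [hN, ← Matrix.mul_assoc, h, Matrix.mul_assoc, Matrix.mul_assoc M s⁻¹,
    ← Matrix.mul_assoc s⁻¹, ← Matrix.mul_assoc s⁻¹, nonsing_inv_mul _ hs, Matrix.one_mul]

theorem orthonormal_invariant_of_riccati {p : Type*} [Fintype p] [DecidableEq n] [DecidableEq p]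
    {A E : Matrix n n ℝ} {V : Matrix n k ℝ} {Vp : Matrix n p ℝ} {Λ₁ : Matrix k k ℝ}
    {Λ₂ : Matrix p p ℝ} (hVV : Vᵀ * V = 1) (hVVp : Vᵀ * Vp = 0) (hVp : Vpᵀ * Vp = 1)
    (hcompl : V * Vᵀ + Vp * Vpᵀ = 1) (hAV : A * V = V * Λ₁) (hAVp : A * Vp = Vp * Λ₂)
    (hE : Eᵀ = E) {Q : Matrix p k ℝ}
    (hQ : Vp * Q * (Λ₁ + Vᵀ * E * V) - Vp * (Λ₂ + Vpᵀ * E * Vp) * Vpᵀ * (Vp * Q) =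
      Vp * (Vpᵀ * E * V) - Vp * Q * (Vp * (Vpᵀ * E * V))ᵀ * (Vp * Q)) :
    ((V + Vp * Q) * matInvSqrt (1 + (Vp * Q)ᵀ * (Vp * Q)))ᵀ *
        ((V + Vp * Q) * matInvSqrt (1 + (Vp * Q)ᵀ * (Vp * Q))) = 1 ∧
      ∃ T : Matrix k k ℝ, (A + E) * ((V + Vp * Q) * matInvSqrt (1 + (Vp * Q)ᵀ * (Vp * Q))) =
        (V + Vp * Q) * matInvSqrt (1 + (Vp * Q)ᵀ * (Vp * Q)) * T := by
  have hVQ : Vᵀ * (Vp * Q) = 0 := by rw [← Matrix.mul_assoc, hVVp, Matrix.zero_mul]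
  have hpd := posDef_transpose_mul_self_add hVV hVQ
  rw [← transpose_mul_self_add hVV hVQ]
  exact ⟨transpose_mul_self_of_mul_matInvSqrt hpd, exists_mul_eq_mul_of_mul_matInvSqrt hpd
    (mul_eq_mul_of_riccati hAV hAVp hVp hcompl hE hQ)⟩

end Orthonormalization

section HeadEigenvalues

variable {n k : Type*} [Fintype n] [Fintype k] [DecidableEq k]

theorem sq_mul_dotProduct_le_of_mulVec_eq_smul {A E : Matrix n n ℝ} {V : Matrix n k ℝ}
    {l : k → ℝ} (hVA : Vᵀ * A = diagonal l * Vᵀ) {u : n → ℝ} {μ δ : ℝ}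
    (hu : (A + E) *ᵥ u = μ • u) (hδ : 0 ≤ δ) (hl : ∀ i, δ ≤ |l i - μ|) :
    δ ^ 2 * ((Vᵀ *ᵥ u) ⬝ᵥ (Vᵀ *ᵥ u)) ≤ (Vᵀ *ᵥ (E *ᵥ u)) ⬝ᵥ (Vᵀ *ᵥ (E *ᵥ u)) := by
  have hEu : Vᵀ *ᵥ (E *ᵥ u) = fun i => (μ - l i) * (Vᵀ *ᵥ u) i := by
    have h : Vᵀ *ᵥ ((A + E) *ᵥ u) = Vᵀ *ᵥ (μ • u) := by rw [hu]
    rw [add_mulVec, mulVec_add, mulVec_smul, mulVec_mulVec _ Vᵀ A, hVA, ← mulVec_mulVec] at h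
    funext i
    have hi := congrFun h i
    rw [Pi.add_apply, mulVec_diagonal, Pi.smul_apply, smul_eq_mul] at hi
    linarith
  rw [hEu, dotProduct, dotProduct, mul_sum]
  refine sum_le_sum fun i _ => ?_
  have hsq : δ ^ 2 ≤ (μ - l i) ^ 2 := by
    rw [← sq_abs (μ - l i), abs_sub_comm]
    exact pow_le_pow_left₀ hδ (hl i) 2
  nlinarith [mul_self_nonneg ((Vᵀ *ᵥ u) i)]

/-- Since `‖Q‖_F ≤ 1/8`, the component `Vᵀu` carries most of the mass of an eigenvector
`u ∈ range (V + Q)`, and on it `A + E` acts as `Λ₁` up to an error `τ`. -/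
theorem lt_abs_of_mulVec_eq_smul {A E : Matrix n n ℝ} {V Q : Matrix n k ℝ} {l : k → ℝ}
    (hVV : Vᵀ * V = 1) (hVQ : Vᵀ * Q = 0) (hQ : ∑ i, ∑ j, Q i j ^ 2 ≤ 1 / 64)
    (hVA : Vᵀ * A = diagonal l * Vᵀ) {c g τ : ℝ} (hl : ∀ i, g ≤ |l i|) (hτ : 0 ≤ τ)
    (hgap : c + 2 * τ < g) (hE : ∀ x, (E *ᵥ x) ⬝ᵥ (E *ᵥ x) ≤ τ ^ 2 * (x ⬝ᵥ x))
    (hV : ∀ x, (Vᵀ *ᵥ x) ⬝ᵥ (Vᵀ *ᵥ x) ≤ x ⬝ᵥ x) {y : k → ℝ} {μ : ℝ}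
    (hy : (V + Q) *ᵥ y ≠ 0) (hμ : (A + E) *ᵥ ((V + Q) *ᵥ y) = μ • ((V + Q) *ᵥ y)) :
    c < |μ| := by
  set u := (V + Q) *ᵥ y
  have hVu : Vᵀ *ᵥ u = y := by
    rw [mulVec_mulVec, Matrix.mul_add, hVV, hVQ, add_zero, one_mulVec]
  have huu : u ⬝ᵥ u = y ⬝ᵥ y + (Q *ᵥ y) ⬝ᵥ (Q *ᵥ y) := by
    rw [mulVec_dotProduct_mulVec, transpose_mul_self_add hVV hVQ, add_mulVec, one_mulVec,
      dotProduct_add, mulVec_dotProduct_mulVec]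
  have hQy := (mulVec_dotProduct_self_le_sum_sum_sq Q y).trans
    (mul_le_mul_of_nonneg_right hQ (dotProduct_self_nonneg y))
  have hy0 : 0 < y ⬝ᵥ y := by
    refine (dotProduct_self_nonneg y).lt_of_ne fun h => hy ?_
    rw [eq_comm, dotProduct_self_eq_zero] at h
    simp [u, h]
  by_contra! hμc
  have hδ := sq_mul_dotProduct_le_of_mulVec_eq_smul hVA hμ (δ := g - c) (by linarith)
    fun i => by linarith [abs_sub_abs_le_abs_sub (l i) μ, hl i]
  rw [hVu] at hδ
  have hsq : (g - c) ^ 2 * (y ⬝ᵥ y) ≤ 65 / 64 * τ ^ 2 * (y ⬝ᵥ y) := by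
    refine hδ.trans ((hV (E *ᵥ u)).trans ((hE u).trans ?_))
    rw [huu]
    nlinarith [sq_nonneg τ]
  nlinarith [le_of_mul_le_mul_right hsq hy0]

theorem sum_sum_sq_le_of_gap {d r : ℕ} (hr : 0 < r) {Q : Matrix (Fin d) (Fin r) ℝ}
    {μ κ g : ℝ} (hμ : 1 ≤ μ) (hκ : 0 ≤ κ)
    (hg : 64 * (1 + r * μ) * r ^ ((3 : ℝ) / 2) * √μ * κ < g)
    (hQ : matMaxNorm Q ≤ 8 * (1 + r * μ) * κ / g / √d) : ∑ i, ∑ j, Q i j ^ 2 ≤ 1 / 64 := by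
  have hr1 : (1 : ℝ) ≤ r := by exact_mod_cast hr
  have hg0 : 0 < g := lt_of_le_of_lt (by positivity) hg
  set ω := 8 * (1 + r * μ) * κ / g with hω
  have hrω : 8 * r * ω ≤ 1 := by
    have hr32 : (r : ℝ) ≤ r ^ ((3 : ℝ) / 2) * √μ := by
      calc (r : ℝ) = r ^ (1 : ℝ) * 1 := by rw [Real.rpow_one, mul_one]
        _ ≤ r ^ ((3 : ℝ) / 2) * √μ :=
          mul_le_mul (Real.rpow_le_rpow_of_exponent_le hr1 (by norm_num))
            (Real.one_le_sqrt.2 hμ) zero_le_one (by positivity)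
    rw [hω, mul_div_assoc', div_le_one hg0]
    calc 8 * r * (8 * (1 + r * μ) * κ) = 64 * (1 + r * μ) * κ * r := by ring
      _ ≤ 64 * (1 + r * μ) * κ * (r ^ ((3 : ℝ) / 2) * √μ) := by gcongr
      _ ≤ g := by linarith
  have hfrob : ∑ i, ∑ j, Q i j ^ 2 ≤ r * ω ^ 2 := by
    refine (sum_sum_sq_le_of_matMaxNorm_le hQ).trans ?_
    rcases Nat.eq_zero_or_pos d with rfl | hd
    · simp only [Fintype.card_fin, CharP.cast_eq_zero, zero_mul]
      positivity
    · rw [Fintype.card_fin, Fintype.card_fin, div_pow, Real.sq_sqrt (Nat.cast_nonneg d)]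
      field_simp
      rfl
  have hω0 : 0 ≤ ω := by positivity
  nlinarith

end HeadEigenvalues

section TailEigenvalues

variable {n p : Type*} [Fintype n] [Fintype p]

theorem exists_mulVec_eq_zero_of_card_lt {m : Type*} [Fintype m] (K : Matrix m p ℝ)
    (h : Fintype.card m < Fintype.card p) : ∃ x ≠ 0, K *ᵥ x = 0 := by
  have hker := LinearMap.ker_ne_bot_of_finrank_lt (f := K.mulVecLin) (by simpa using h)
  obtain ⟨x, hx, hx0⟩ := (Submodule.ne_bot_iff _).1 hker
  exact ⟨x, hx0, hx⟩

/-- Courant–Fischer: the span of the first `r + 1` eigenvectors meets the kernel of `Vᵀ`. -/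
theorem abs_le_of_forall_transpose_mulVec_eq_zero {d r : ℕ} {A : Matrix n n ℝ}
    {vt : Fin d → n → ℝ} {lamt : Fin d → ℝ} (heig : ∀ i, A *ᵥ vt i = lamt i • vt i)
    (hon : ∀ i j, ∑ a, vt i a * vt j a = if i = j then (1 : ℝ) else 0)
    (hdec : ∀ i j, i ≤ j → |lamt j| ≤ |lamt i|) (V : Matrix n (Fin r) ℝ) {c : ℝ} (hc : 0 ≤ c)
    (hbound : ∀ w, Vᵀ *ᵥ w = 0 → (A *ᵥ w) ⬝ᵥ (A *ᵥ w) ≤ c ^ 2 * (w ⬝ᵥ w))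
    (i : Fin d) (hi : r ≤ i) : |lamt i| ≤ c := by
  have hr : r + 1 ≤ d := by omega
  by_contra! hlt
  set W : Matrix n (Fin (r + 1)) ℝ := of fun a j => vt (Fin.castLE hr j) a
  have hWW : Wᵀ * W = 1 := transpose_mul_self_of_orthonormal hon (Fin.castLE_injective hr)
  have hbig : ∀ j, c ^ 2 < lamt (Fin.castLE hr j) ^ 2 := fun j => sq_lt_sq.2 <| by
    rw [abs_of_nonneg hc]
    exact hlt.trans_le (hdec _ _ (by rw [Fin.le_iff_val_le_val, Fin.val_castLE]; omega))
  obtain ⟨x, hx0, hx⟩ := exists_mulVec_eq_zero_of_card_lt (Vᵀ * W) (by simp)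
  have hw := hbound (W *ᵥ x) (by rw [mulVec_mulVec, hx])
  rw [mulVec_mulVec, mul_of_eigenvectors heig, ← mulVec_mulVec,
    mulVec_dotProduct_self_of_orthonormal hWW, mulVec_dotProduct_self_of_orthonormal hWW,
    diagonal_mulVec_dotProduct_self] at hw
  obtain ⟨j, hj⟩ := Function.ne_iff.1 hx0
  refine hw.not_gt ?_
  rw [dotProduct, mul_sum]
  refine sum_lt_sum (fun j _ => ?_) ⟨j, mem_univ _, ?_⟩ <;> rw [← sq]
  · exact mul_le_mul_of_nonneg_right (hbig j).le (sq_nonneg _)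
  · exact mul_lt_mul_of_pos_right (hbig j) ((sq_nonneg _).lt_of_ne (pow_ne_zero 2 hj).symm)

theorem mulVec_dotProduct_self_le_of_transpose_mulVec_eq_zero {k : Type*} [Fintype k]
    [DecidableEq n] [DecidableEq p] {A : Matrix n n ℝ} {V : Matrix n k ℝ} {Vp : Matrix n p ℝ}
    {l : p → ℝ} {ε : ℝ} (hcompl : V * Vᵀ + Vp * Vpᵀ = 1) (hVp : Vpᵀ * Vp = 1)
    (hAVp : A * Vp = Vp * diagonal l) (hl : ∀ i, |l i| ≤ ε) {w : n → ℝ} (hw : Vᵀ *ᵥ w = 0) :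
    (A *ᵥ w) ⬝ᵥ (A *ᵥ w) ≤ ε ^ 2 * (w ⬝ᵥ w) := by
  have hw' : w = Vp *ᵥ (Vpᵀ *ᵥ w) := by
    conv_lhs => rw [← one_mulVec w, ← hcompl]
    rw [add_mulVec, ← mulVec_mulVec, hw, mulVec_zero, zero_add, mulVec_mulVec]
  have hbessel := transpose_mulVec_dotProduct_self_le (add_comm (V * Vᵀ) _ ▸ hcompl) w
  set z := Vpᵀ *ᵥ w
  calc (A *ᵥ w) ⬝ᵥ (A *ᵥ w) = ∑ i, l i ^ 2 * z i ^ 2 := by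
        rw [hw', mulVec_mulVec, hAVp, ← mulVec_mulVec, mulVec_dotProduct_self_of_orthonormal hVp,
          diagonal_mulVec_dotProduct_self]
    _ ≤ ∑ i, ε ^ 2 * (z i * z i) := sum_le_sum fun i _ => by
        rw [← sq]
        exact mul_le_mul_of_nonneg_right (sq_le_sq.2 ((hl i).trans (le_abs_self ε))) (sq_nonneg _)
    _ = ε ^ 2 * (z ⬝ᵥ z) := by rw [← mul_sum]; rfl
    _ ≤ ε ^ 2 * (w ⬝ᵥ w) := mul_le_mul_of_nonneg_left hbessel (sq_nonneg ε)

theorem abs_le_add_of_perturbation [DecidableEq n] [DecidableEq p] {d r : ℕ}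
    {A E : Matrix n n ℝ} {V : Matrix n (Fin r) ℝ} {Vp : Matrix n p ℝ} {l : p → ℝ} {ε τ : ℝ}
    (hcompl : V * Vᵀ + Vp * Vpᵀ = 1) (hVp : Vpᵀ * Vp = 1) (hAVp : A * Vp = Vp * diagonal l)
    (hl : ∀ i, |l i| ≤ ε) (hε : 0 ≤ ε) (hτ : 0 ≤ τ)
    (hE : ∀ x, (E *ᵥ x) ⬝ᵥ (E *ᵥ x) ≤ τ ^ 2 * (x ⬝ᵥ x)) {vt : Fin d → n → ℝ}
    {lamt : Fin d → ℝ} (heig : ∀ i, (A + E) *ᵥ vt i = lamt i • vt i)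
    (hon : ∀ i j, ∑ a, vt i a * vt j a = if i = j then (1 : ℝ) else 0)
    (hdec : ∀ i j, i ≤ j → |lamt j| ≤ |lamt i|) (i : Fin d) (hi : r ≤ i) : |lamt i| ≤ ε + τ :=
  abs_le_of_forall_transpose_mulVec_eq_zero heig hon hdec V (by positivity) (fun w hw => by
    rw [add_mulVec]
    exact add_dotProduct_self_le hε hτ (dotProduct_self_nonneg w)
      (mulVec_dotProduct_self_le_of_transpose_mulVec_eq_zero hcompl hVp hAVp hl hw) (hE w)) i hi

end TailEigenvalues

section Separation

variable {n k p : Type*} [Fintype n] [Fintype k] [Fintype p] [DecidableEq k] [DecidableEq p]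

theorem eq_zero_of_diagonal_mul_eq_mul {T : Matrix k k ℝ} (hT : T.IsHermitian)
    {Z : Matrix p k ℝ} {l : p → ℝ} (h : diagonal l * Z = Z * T)
    (hl : ∀ i j, l i ≠ hT.eigenvalues j) : Z = 0 := by
  have hZX : Z * (hT.eigenvectorUnitary : Matrix k k ℝ) = 0 := by
    ext i j
    have hj : (diagonal l * Z) *ᵥ hT.eigenvectorBasis j = (Z * T) *ᵥ hT.eigenvectorBasis j := by
      rw [h]
    rw [← mulVec_mulVec, ← mulVec_mulVec, hT.mulVec_eigenvectorBasis, mulVec_smul] at hj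
    have hi := congrFun hj i
    rw [mulVec_diagonal, Pi.smul_apply, smul_eq_mul] at hi
    have hzero : (Z *ᵥ hT.eigenvectorBasis j) i * (l i - hT.eigenvalues j) = 0 := by linarith
    exact (mul_eq_zero.1 hzero).resolve_right (sub_ne_zero.2 (hl i j))
  calc Z = Z * ((hT.eigenvectorUnitary : Matrix k k ℝ) *
        star (hT.eigenvectorUnitary : Matrix k k ℝ)) := by
        rw [Unitary.mul_star_self_of_mem hT.eigenvectorUnitary.prop, Matrix.mul_one]
    _ = 0 := by rw [← Matrix.mul_assoc, hZX, Matrix.zero_mul]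

theorem transpose_mul_eq_zero_of_forall_ne {A : Matrix n n ℝ} (hA : Aᵀ = A)
    {W : Matrix n k ℝ} (hW : Wᵀ * W = 1) {T : Matrix k k ℝ} (hAW : A * W = W * T)
    {Y : Matrix n p ℝ} {l : p → ℝ} (hY : Yᵀ * A = diagonal l * Yᵀ)
    (hsep : ∀ (b : k → ℝ) (μ : ℝ), W *ᵥ b ≠ 0 → A *ᵥ (W *ᵥ b) = μ • (W *ᵥ b) → ∀ i, l i ≠ μ) :
    Yᵀ * W = 0 := by
  have hT : T = Wᵀ * A * W := by
    rw [Matrix.mul_assoc, hAW, ← Matrix.mul_assoc, hW, Matrix.one_mul]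
  have hTh : T.IsHermitian := by
    rw [IsHermitian, conjTranspose_eq_transpose_of_trivial, hT, transpose_mul, transpose_mul,
      transpose_transpose, hA, Matrix.mul_assoc]
  refine eq_zero_of_diagonal_mul_eq_mul hTh (by
    rw [← Matrix.mul_assoc, ← hY, Matrix.mul_assoc, hAW, Matrix.mul_assoc]) fun i j => ?_
  refine hsep (hTh.eigenvectorBasis j) _ (fun h0 => ?_) ?_ i
  · have hb := congrArg (Wᵀ *ᵥ ·) h0
    simp only [mulVec_mulVec, hW, one_mulVec, mulVec_zero] at hb
    exact hTh.eigenvectorBasis.orthonormal.ne_zero j (by simpa using hb)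
  · rw [mulVec_mulVec, hAW, ← mulVec_mulVec, hTh.mulVec_eigenvectorBasis, mulVec_smul]

end Separation

theorem exists_orthogonal_mul_eq {n k p : Type*} [Fintype n] [Fintype k] [Fintype p]
    [DecidableEq n] [DecidableEq k] {W Vt : Matrix n k ℝ} {Vtp : Matrix n p ℝ}
    (hW : Wᵀ * W = 1) (hcompl : Vt * Vtᵀ + Vtp * Vtpᵀ = 1) (hZ : Vtpᵀ * W = 0) :
    ∃ R : Matrix k k ℝ, Rᵀ * R = 1 ∧ W * R = Vt := by
  set K := Vtᵀ * W with hKdef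
  have hW' : Vt * K = W := by
    rw [← add_zero (Vt * K), ← Matrix.mul_zero Vtp, ← hZ, hKdef, ← Matrix.mul_assoc,
      ← Matrix.mul_assoc, ← Matrix.add_mul, hcompl, Matrix.one_mul]
  have hK : K * Kᵀ = 1 := by
    refine mul_eq_one_comm.1 ?_
    calc Kᵀ * K = Wᵀ * (Vt * K) := by
          rw [hKdef, transpose_mul, transpose_transpose, Matrix.mul_assoc]
      _ = 1 := by rw [hW', hW]
  refine ⟨Kᵀ, by rw [transpose_transpose, hK], ?_⟩
  rw [← hW', Matrix.mul_assoc, hK, Matrix.mul_one]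

end SymmetricPerturbation

open SymmetricPerturbation

/-- The candidate eigenbasis V̄ spans the top-r eigenspace of Ã = A + E
(Lemma 5.3 of Fan–Wang–Zhong). -/
theorem candidate_basis_matches_perturbed_eigenspace
    (d r : ℕ) (hr : 0 < r) (hrd : r ≤ d)
    (A E : Matrix (Fin d) (Fin d) ℝ)
    (hAsymm : Aᵀ = A) (hEsymm : Eᵀ = E)
    (lam : Fin d → ℝ) (v : Fin d → Fin d → ℝ)
    (heig : ∀ i, A.mulVec (v i) = lam i • v i)
    (hon : ∀ i j, ∑ k, v i k * v j k = if i = j then (1 : ℝ) else 0)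
    (hdec : ∀ i j : Fin d, i ≤ j → |lam j| ≤ |lam i|)
    (V : Matrix (Fin d) (Fin r) ℝ)
    (hV : V = Matrix.of fun a k => v (Fin.castLE hrd k) a)
    (Vp : Matrix (Fin d) (Fin (d - r)) ℝ)
    (hVp : Vp = Matrix.of fun (a : Fin d) (k : Fin (d - r)) => v ⟨r + (k : ℕ), by have := k.isLt; omega⟩ a)
    (Lam₁ : Matrix (Fin r) (Fin r) ℝ)
    (hLam₁ : Lam₁ = Matrix.diagonal fun i => lam (Fin.castLE hrd i))
    (Lam₂ : Matrix (Fin (d - r)) (Fin (d - r)) ℝ)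
    (hLam₂ : Lam₂ = Matrix.diagonal fun k : Fin (d - r) =>
      lam ⟨r + (k : ℕ), by have := k.isLt; omega⟩)
    (Ar : Matrix (Fin d) (Fin d) ℝ)
    (hAr : Ar = Matrix.of fun a b => ∑ k : Fin r,
      lam (Fin.castLE hrd k) * v (Fin.castLE hrd k) a * v (Fin.castLE hrd k) b)
    (eps tau kappa mu : ℝ)
    (heps : eps = matInfNorm (A - Ar))
    (htau : tau = matInfNorm E)
    (hkappa : kappa = Real.sqrt d * matMaxNorm (E * V))
    (hmu : mu = matCoherence V)
    (H : Matrix (Fin d) (Fin r) ℝ) (hH : H = Vp * (Vpᵀ * E * V))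
    (L₁ : Matrix (Fin r) (Fin r) ℝ) (hL₁ : L₁ = Lam₁ + Vᵀ * E * V)
    (L₂ : Matrix (Fin d) (Fin d) ℝ) (hL₂ : L₂ = Vp * (Lam₂ + Vpᵀ * E * Vp) * Vpᵀ)
    (omega : ℝ)
    (homega : omega = 8 * (1 + (r : ℝ) * mu) * kappa /
      (|lam (Fin.castLE hrd ⟨r - 1, by omega⟩)| - eps))
    -- eigendecomposition of Ã = A + E, ordered by decreasing |λ̃|
    (lamt : Fin d → ℝ) (vt : Fin d → Fin d → ℝ)
    (heigt : ∀ i, (A + E).mulVec (vt i) = lamt i • vt i)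
    (hont : ∀ i j, ∑ k, vt i k * vt j k = if i = j then (1 : ℝ) else 0)
    (hdect : ∀ i j : Fin d, i ≤ j → |lamt j| ≤ |lamt i|)
    (Vt : Matrix (Fin d) (Fin r) ℝ)
    (hVt : Vt = Matrix.of fun a k => vt (Fin.castLE hrd k) a)
    -- gap condition
    (hgap : max (3 * tau) (64 * (1 + (r : ℝ) * mu) * (r : ℝ) ^ ((3 : ℝ) / 2) *
        Real.sqrt mu * kappa) <
      |lam (Fin.castLE hrd ⟨r - 1, by omega⟩)| - eps)
    -- Q̄ = V_⊥ Q is any solution of the quadratic equation with the max-norm bound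
    (Q : Matrix (Fin (d - r)) (Fin r) ℝ)
    (hQsol : (Vp * Q) * L₁ - L₂ * (Vp * Q) = H - (Vp * Q) * Hᵀ * (Vp * Q))
    (hQbound : matMaxNorm (Vp * Q) ≤ omega / Real.sqrt d)
    (Vbar : Matrix (Fin d) (Fin r) ℝ)
    (hVbar : Vbar = (V + Vp * Q) * matInvSqrt (1 + (Vp * Q)ᵀ * (Vp * Q))) :
    ∃ R : Matrix (Fin r) (Fin r) ℝ, Rᵀ * R = 1 ∧ Vbar * R = Vt := by
  subst hH hL₁ hL₂ hLam₁ hLam₂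
  obtain ⟨hVV, hVVp, hVpVp, hcompl⟩ := orthonormal_head_tail hrd hon hV hVp
  obtain ⟨-, -, -, hcomplt⟩ := orthonormal_head_tail hrd hont hVt rfl
  have hAV : A * V = V * diagonal fun i => lam (Fin.castLE hrd i) := by
    rw [hV]; exact mul_of_eigenvectors heig _
  have hAVp : A * Vp = Vp * diagonal fun k : Fin (d - r) => lam ⟨r + k, by omega⟩ := by
    rw [hVp]; exact mul_of_eigenvectors heig _
  have hτ : 0 ≤ tau := htau ▸ matInfNorm_nonneg E
  have hE : ∀ x, (E *ᵥ x) ⬝ᵥ (E *ᵥ x) ≤ tau ^ 2 * (x ⬝ᵥ x) :=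
    htau ▸ mulVec_dotProduct_self_le_matInfNorm_sq hEsymm
  have hlamt_tail := abs_le_add_of_perturbation hcompl hVpVp hAVp
    (by rw [heps, hAr]; exact abs_le_matInfNorm_sub_head hrd heig hon)
    (heps ▸ matInfNorm_nonneg _) hτ hE heigt hont hdect
  obtain ⟨hW, T, hT⟩ :=
    orthonormal_invariant_of_riccati hVV hVVp hVpVp hcompl hAV hAVp hEsymm hQsol
  rw [← hVbar] at hW hT
  have hQ : ∑ i, ∑ j, (Vp * Q) i j ^ 2 ≤ 1 / 64 :=
    sum_sum_sq_le_of_gap hr (hmu ▸ one_le_matCoherence hr hVV)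
      (hkappa ▸ by positivity [matMaxNorm_nonneg (E * V)])
      ((le_max_right _ _).trans_lt hgap) (homega ▸ hQbound)
  have hhead : ∀ k, |lam (Fin.castLE hrd ⟨r - 1, by omega⟩)| ≤ |lam (Fin.castLE hrd k)| :=
    fun k => hdec _ _ (by simp only [Fin.le_iff_val_le_val, Fin.val_castLE]; omega)
  have hAEsymm : (A + E)ᵀ = A + E := by rw [transpose_add, hAsymm, hEsymm]
  have hVQ : Vᵀ * (Vp * Q) = 0 := by rw [← Matrix.mul_assoc, hVVp, Matrix.zero_mul]
  have hZ := transpose_mul_eq_zero_of_forall_ne hAEsymm hW hT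
    (transpose_mul_eq_diagonal_mul hAEsymm (mul_of_eigenvectors heigt
      (fun k : Fin (d - r) => (⟨r + k, by omega⟩ : Fin d)))) fun b μ hb hμ i => by
    rw [hVbar, ← mulVec_mulVec] at hb hμ
    refine ne_of_apply_ne abs (ne_of_lt ((hlamt_tail _ (Nat.le_add_right r i)).trans_lt ?_))
    exact lt_abs_of_mulVec_eq_smul hVV hVQ hQ (transpose_mul_eq_diagonal_mul hAsymm hAV) hhead hτ
      (by linarith [(le_max_left _ _).trans_lt hgap]) hE
      (transpose_mulVec_dotProduct_self_le hcompl) hb hμ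
  exact exists_orthogonal_mul_eq hW hcomplt hZ
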